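/- arXiv:2310.01771 — 3 statements merged into one kernel-verified Lean document; each statement's English description precedes it below -/
import Mathlib

section
/- Let H be a hypergraph and H_B^φ a 2-fold covering determined by a voltage assignment φ: each incidence (v,e) is assigned an element φ(e,v) ∈ S_2, recorded as a sign sgn φ(v,e) ∈ {±1}. Define the incidence-signed adjacency matrix A(H,φ) by A(H,φ)_{uv} = Σ_{e : {u,v} ⊆ e} sgn φ(u,e)·sgn φ(v,e) for u ≠ v, and 0 on the diagonal. Then the spectrum of A(H_B^φ) is the multiset union of the spectrum of A(H) and the spectrum of A(H,φ). -/
/-!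
Order the vertices of the cover as `V ⊕ V` (the two sheets). For `σ τ ∈ S₂` we have
`σ i = τ j ↔ (i = j ↔ sgn σ = sgn τ)`, so the cover's adjacency matrix is the block matrix
`[[S, D], [D, S]]`, where `S u v` (resp. `D u v`) counts the edges through `u` and `v` on which
the signs of `φ` agree (resp. differ). Then `A(H) = S + D` and `A(H, φ) = S - D`, and the
unimodular block operations `[[1, 1], [0, 1]] * [[S, D], [D, S]] * [[1, -1], [0, 1]] =
[[S + D, 0], [D, S - D]]` split the characteristic polynomial accordingly.
-/

open Matrix

namespace Matrix

variable {n R : Type*} [Fintype n] [DecidableEq n] [CommRing R]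

theorem det_fromBlocks_self_swap (A B : Matrix n n R) :
    (fromBlocks A B B A).det = (A + B).det * (A - B).det := by
  have hL : (fromBlocks 1 1 0 1 : Matrix (n ⊕ n) (n ⊕ n) R).det = 1 := by simp
  have hR : (fromBlocks 1 (-1) 0 1 : Matrix (n ⊕ n) (n ⊕ n) R).det = 1 := by simp
  have hconj : fromBlocks 1 1 0 1 * fromBlocks A B B A * fromBlocks 1 (-1) 0 1 =
      fromBlocks (A + B) 0 B (A - B) := by
    simp only [fromBlocks_multiply, Matrix.one_mul, Matrix.mul_one, Matrix.zero_mul,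
      Matrix.mul_zero, Matrix.mul_neg, zero_add, add_zero]
    congr 1 <;> abel
  calc (fromBlocks A B B A).det
      = (fromBlocks 1 1 0 1 * fromBlocks A B B A * fromBlocks 1 (-1) 0 1).det := by
        rw [det_mul, det_mul, hL, hR, one_mul, mul_one]
    _ = (A + B).det * (A - B).det := by rw [hconj, det_fromBlocks_zero₁₂]

theorem charpoly_fromBlocks_self_swap (A B : Matrix n n R) :
    (fromBlocks A B B A).charpoly = (A + B).charpoly * (A - B).charpoly := by
  have hadd : charmatrix (A + B) = charmatrix A + -B.map Polynomial.C := by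
    rw [charmatrix, charmatrix, map_add, RingHom.mapMatrix_apply]
    abel
  have hsub : charmatrix (A - B) = charmatrix A - -B.map Polynomial.C := by
    rw [charmatrix, charmatrix, map_sub, RingHom.mapMatrix_apply]
    abel
  rw [charpoly, charmatrix_fromBlocks, det_fromBlocks_self_swap, charpoly, charpoly, hadd, hsub]

theorem charpoly_of_prod_finTwo (A B : Matrix n n R) :
    (of fun p q : n × Fin 2 => if p.2 = q.2 then A p.1 q.1 else B p.1 q.1).charpoly =
      (A + B).charpoly * (A - B).charpoly := by
  let e : n × Fin 2 ≃ n ⊕ n :=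
    (Equiv.prodComm n (Fin 2)).trans ((finTwoEquiv.prodCongr (Equiv.refl n)).trans
      (Equiv.boolProdEquivSum n))
  have : (of fun p q : n × Fin 2 => if p.2 = q.2 then A p.1 q.1 else B p.1 q.1) =
      reindex e.symm e.symm (fromBlocks A B B A) := by
    ext ⟨u, i⟩ ⟨v, j⟩
    fin_cases i <;> fin_cases j <;> rfl
  rw [this, charpoly_reindex, charpoly_fromBlocks_self_swap]

end Matrix

theorem Int.units_cast_mul_units_cast {R : Type*} [Ring R] (a b : ℤˣ) :
    ((a : ℤ) : R) * ((b : ℤ) : R) = if a = b then 1 else -1 := by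
  rcases Int.units_eq_one_or a with rfl | rfl <;> rcases Int.units_eq_one_or b with rfl | rfl <;>
    simp

theorem Equiv.Perm.finTwo_apply_eq_apply_iff (σ τ : Equiv.Perm (Fin 2)) (i j : Fin 2) :
    σ i = τ j ↔ (i = j ↔ Equiv.Perm.sign σ = Equiv.Perm.sign τ) := by
  revert σ τ i j
  decide

section Hypergraph

open Finset

variable {V E : Type*} [Fintype E] [DecidableEq V] (edges : E → Finset V)
  (φ : E → V → Equiv.Perm (Fin 2))

def sameSignAdj : Matrix V V ℝ :=
  of fun u v => if u = v then 0 else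
    (#{e | u ∈ edges e ∧ v ∈ edges e ∧ (φ e u).sign = (φ e v).sign} : ℝ)

def oppSignAdj : Matrix V V ℝ :=
  of fun u v => (#{e | u ∈ edges e ∧ v ∈ edges e ∧ (φ e u).sign ≠ (φ e v).sign} : ℝ)

variable {edges φ}

theorem card_filter_eq_add_card_filter (p r : E → Prop) [DecidablePred p] [DecidablePred r] :
    #{e | p e} = #{e | p e ∧ r e} + #{e | p e ∧ ¬r e} := by
  rw [← filter_filter, ← filter_filter, card_filter_add_card_filter_not]

theorem eq_sameSignAdj_add_oppSignAdj (A : Matrix V V ℝ)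
    (hA : ∀ u w, A u w = if u = w then 0 else (#{e | u ∈ edges e ∧ w ∈ edges e} : ℝ)) :
    A = sameSignAdj edges φ + oppSignAdj edges φ := by
  ext u v
  by_cases huv : u = v
  · subst huv
    simp [hA, sameSignAdj, oppSignAdj]
  · simp only [hA, Matrix.add_apply, sameSignAdj, oppSignAdj, of_apply, if_neg huv]
    rw [card_filter_eq_add_card_filter _ fun e => (φ e u).sign = (φ e v).sign]
    simp only [and_assoc, Nat.cast_add, ne_eq]

theorem eq_sameSignAdj_sub_oppSignAdj (Asgn : Matrix V V ℝ)
    (hAsgn : ∀ u w, Asgn u w = if u = w then 0 else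
      ∑ e ∈ univ.filter (fun e => u ∈ edges e ∧ w ∈ edges e),
        (((Equiv.Perm.sign (φ e u) : ℤ) : ℝ) * ((Equiv.Perm.sign (φ e w) : ℤ) : ℝ))) :
    Asgn = sameSignAdj edges φ - oppSignAdj edges φ := by
  ext u v
  by_cases huv : u = v
  · subst huv
    simp [hAsgn, sameSignAdj, oppSignAdj]
  · simp only [hAsgn, Matrix.sub_apply, sameSignAdj, oppSignAdj, of_apply, if_neg huv,
      Int.units_cast_mul_units_cast, sum_ite, sum_const, filter_filter, and_assoc,
      nsmul_eq_mul, mul_one, mul_neg, sub_eq_add_neg]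

theorem coverAdj_apply (Acov : Matrix (V × Fin 2) (V × Fin 2) ℝ)
    (hAcov : ∀ u i v j, Acov (u, i) (v, j) = if (u, i) = (v, j) then 0 else
      (#{e | u ∈ edges e ∧ v ∈ edges e ∧ φ e u i = φ e v j} : ℝ))
    (u v : V) (i j : Fin 2) :
    Acov (u, i) (v, j) = if i = j then sameSignAdj edges φ u v else oppSignAdj edges φ u v := by
  simp only [hAcov, Equiv.Perm.finTwo_apply_eq_apply_iff, sameSignAdj, oppSignAdj, of_apply]
  by_cases hij : i = j
  · simp [hij, and_comm]
  · simp [hij]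

end Hypergraph

/-- For a hypergraph `H` and a 2-fold covering `H_B^φ` determined by a
voltage assignment `φ` into `S₂` (with signs `sgn φ(v,e)`), the spectrum of the cover
is the multiset union of the spectrum of `A(H)` and the spectrum of the
incidence-signed adjacency matrix `A(H,φ)`; equivalently the characteristic
polynomials multiply. -/
theorem two_cover_spectrum_union
    {V E : Type*} [Fintype V] [Fintype E] [DecidableEq V]
    (edges : E → Finset V)
    (φ : E → V → Equiv.Perm (Fin 2))
    (A : Matrix V V ℝ)
    (hA : ∀ u w, A u w = if u = w then 0 else
      ((Finset.univ.filter fun e => u ∈ edges e ∧ w ∈ edges e).card : ℝ))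
    (Asgn : Matrix V V ℝ)
    (hAsgn : ∀ u w, Asgn u w = if u = w then 0 else
      ∑ e ∈ Finset.univ.filter (fun e => u ∈ edges e ∧ w ∈ edges e),
        (((Equiv.Perm.sign (φ e u) : ℤ) : ℝ) * ((Equiv.Perm.sign (φ e w) : ℤ) : ℝ)))
    (Acov : Matrix (V × Fin 2) (V × Fin 2) ℝ)
    (hAcov : ∀ u i v j, Acov (u, i) (v, j) = if (u, i) = (v, j) then 0 else
      ((Finset.univ.filter fun e =>
        u ∈ edges e ∧ v ∈ edges e ∧ φ e u i = φ e v j).card : ℝ)) :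
    Acov.charpoly = A.charpoly * Asgn.charpoly := by
  have hcov : Acov = of fun p q : V × Fin 2 =>
      if p.2 = q.2 then sameSignAdj edges φ p.1 q.1 else oppSignAdj edges φ p.1 q.1 := by
    ext ⟨u, i⟩ ⟨v, j⟩
    exact coverAdj_apply Acov hAcov u v i j
  rw [hcov, charpoly_of_prod_finTwo, ← eq_sameSignAdj_add_oppSignAdj A hA,
    ← eq_sameSignAdj_sub_oppSignAdj Asgn hAsgn]
end

section
/- (Godsil–Gutman) Let G be a simple graph on n vertices with m edges. For a signing s ∈ {±1}^m, let A_s be the signed adjacency matrix (the adjacency matrix of G with the entry for edge e_i multiplied by s_i) and ψ_s(x) = det(xI − A_s). Then the average of ψ_s(x) over all 2^m signings s equals the matching polynomial μ_G(x) = Σ_{i≥0} (−1)^i m_i x^{n−2i}, where m_i is the number of i-edge matchings of G. -/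
/-!
Expand `det (X - A_s)` over permutations: since `A_s` has zero diagonal, the term of `σ` is
`sign σ · ∏_{v moved by σ} (-A_s (σ v) v) · X ^ (number of fixed points)`. Summed over all
signings `s`, this vanishes unless `σ` is an involution whose 2-cycles are edges: a non-edge
factor is `0`, and if `σ (σ v₀) ≠ v₀`, flipping the sign of the edge `{σ v₀, v₀}` negates exactly
one factor and pairs the signings off. For an involution with `k` edge 2-cycles every cycle
contributes `A_s(u,v)² = 1` and `sign σ = (-1)^k`, so each of the `2^m` signings contributes
`(-1)^k X^(n-2k)`. These involutions are exactly the matchings with `k` edges.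
-/

open Finset Matrix Polynomial Equiv Equiv.Perm Function

theorem Matrix.charpoly_eq_sum_perm_of_diag_eq_zero {n R : Type*} [Fintype n] [DecidableEq n]
    [CommRing R] (A : Matrix n n R) (hA : ∀ i, A i i = 0) :
    A.charpoly = ∑ σ : Perm n,
      sign σ • (C (∏ i ∈ σ.support, -A (σ i) i) * X ^ (Fintype.card n - #σ.support)) := by
  rw [charpoly, det_apply]
  refine sum_congr rfl fun σ _ => congrArg _ ?_
  rw [← prod_mul_prod_compl σ.support, map_prod, ← card_compl, ← prod_const]
  congr 1
  · exact prod_congr rfl fun i hi => by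
      rw [charmatrix_apply_ne _ _ _ (mem_support.mp hi), map_neg]
  · exact prod_congr rfl fun i hi => by
      rw [notMem_support.mp (mem_compl.mp hi), charmatrix_apply_eq, hA, map_zero, sub_zero]

namespace Equiv.Perm

theorem mk_apply_eq_of_mem {α : Type*} {σ : Perm α} (hσ : Involutive σ) {u v : α}
    (hu : u ∈ s(v, σ v)) : s(v, σ v) = s(u, σ u) := by
  rcases Sym2.mem_iff.mp hu with rfl | rfl
  · rfl
  · rw [hσ v, Sym2.eq_swap]

variable {α : Type*} [DecidableEq α] [Fintype α]

theorem sign_of_involutive {σ : Perm α} (hσ : Involutive σ) :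
    sign σ = (-1) ^ (#σ.support / 2) := by
  rw [sign_of_pow_two_eq_one (Equiv.ext fun v => hσ v), card_fixedPoints, sum_cycleType,
    Nat.sub_sub_self (card_le_univ _)]

def supportEdges (σ : Perm α) : Finset (Sym2 α) := σ.support.image fun v => s(v, σ v)

theorem card_support_eq_two_mul_card_supportEdges {σ : Perm α} (hσ : Involutive σ) :
    #σ.support = 2 * #σ.supportEdges := by
  rw [card_eq_sum_card_fiberwise fun v hv => mem_image_of_mem (fun v => s(v, σ v)) hv,
    mul_comm, ← smul_eq_mul, ← sum_const]
  refine sum_congr rfl fun e he => ?_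
  obtain ⟨v, hv, rfl⟩ := mem_image.mp he
  have hfiber : {u ∈ σ.support | s(u, σ u) = s(v, σ v)} = {v, σ v} := by
    ext u
    simp only [mem_filter, mem_insert, mem_singleton]
    constructor
    · rintro ⟨-, hu⟩
      exact (Sym2.eq_iff.mp hu).imp And.left And.left
    · rintro (rfl | rfl)
      · exact ⟨hv, rfl⟩
      · exact ⟨apply_mem_support.mpr hv, by rw [hσ v, Sym2.eq_swap]⟩
  rw [hfiber, card_pair (Perm.mem_support.mp hv).symm]

end Equiv.Perm

namespace SimpleGraph

section partner

variable {V : Type*} [DecidableEq V]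

noncomputable def partner (M : Finset (Sym2 V)) (v : V) : V :=
  if h : ∃ e ∈ M, v ∈ e then Sym2.Mem.other h.choose_spec.2 else v

theorem partner_of_not_exists {M : Finset (Sym2 V)} {v : V} (h : ¬∃ e ∈ M, v ∈ e) :
    partner M v = v :=
  dif_neg h

theorem mk_partner_mem {M : Finset (Sym2 V)} {v : V} (h : ∃ e ∈ M, v ∈ e) :
    s(v, partner M v) ∈ M := by
  rw [partner, dif_pos h, Sym2.other_spec]
  exact h.choose_spec.1

theorem partner_supportEdges [Fintype V] {σ : Perm V} (hσ : Involutive σ) :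
    partner σ.supportEdges = σ := by
  funext v
  by_cases hv : v ∈ σ.support
  · obtain ⟨w, -, hw⟩ := mem_image.mp
      (mk_partner_mem ⟨_, mem_image_of_mem (fun v => s(v, σ v)) hv, Sym2.mem_mk_left v (σ v)⟩)
    have hvw : v ∈ s(w, σ w) := hw ▸ Sym2.mem_mk_left _ _
    exact (Sym2.congr_right.mp ((mk_apply_eq_of_mem hσ hvw).symm.trans hw)).symm
  · rw [partner_of_not_exists, notMem_support.mp hv]
    rintro ⟨_, he, hve⟩
    obtain ⟨w, hw, rfl⟩ := mem_image.mp he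
    rcases Sym2.mem_iff.mp hve with rfl | rfl
    · exact hv hw
    · exact hv (apply_mem_support.mpr hw)

end partner

variable {V : Type*} [Fintype V] [DecidableEq V] {G : SimpleGraph V} [DecidableRel G.Adj]

section matchings

variable (G) in
def matchings : Finset (Finset (Sym2 V)) :=
  G.edgeFinset.powerset.filter fun M => ∀ a ∈ M, ∀ b ∈ M, a ≠ b → ∀ v : V, ¬(v ∈ a ∧ v ∈ b)

variable {M : Finset (Sym2 V)}

theorem mem_matchings : M ∈ G.matchings ↔
    M ⊆ G.edgeFinset ∧ ∀ a ∈ M, ∀ b ∈ M, a ≠ b → ∀ v : V, ¬(v ∈ a ∧ v ∈ b) := by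
  rw [matchings, mem_filter, mem_powerset]

theorem eq_of_mem_matchings (hM : M ∈ G.matchings) {e f : Sym2 V} (he : e ∈ M) (hf : f ∈ M)
    {v : V} (hve : v ∈ e) (hvf : v ∈ f) : e = f := by
  by_contra hne
  exact (mem_matchings.mp hM).2 e he f hf hne v ⟨hve, hvf⟩

theorem supportEdges_mem_matchings {σ : Perm V} (hσ : Involutive σ)
    (hadj : ∀ v ∈ σ.support, G.Adj (σ v) v) : σ.supportEdges ∈ G.matchings := by
  refine mem_matchings.mpr ⟨fun e he => ?_, ?_⟩
  · obtain ⟨v, hv, rfl⟩ := mem_image.mp he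
    simpa using (hadj v hv).symm
  · rintro _ ha _ hb hne u ⟨hua, hub⟩
    obtain ⟨v, -, rfl⟩ := mem_image.mp ha
    obtain ⟨w, -, rfl⟩ := mem_image.mp hb
    exact hne ((mk_apply_eq_of_mem hσ hua).trans (mk_apply_eq_of_mem hσ hub).symm)

theorem eq_mk_partner (hM : M ∈ G.matchings) {e : Sym2 V} (he : e ∈ M) {v : V} (hv : v ∈ e) :
    e = s(v, partner M v) :=
  eq_of_mem_matchings hM he (mk_partner_mem ⟨e, he, hv⟩) hv (Sym2.mem_mk_left _ _)

theorem partner_ne_iff (hM : M ∈ G.matchings) {v : V} : partner M v ≠ v ↔ ∃ e ∈ M, v ∈ e := by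
  refine ⟨fun hne => by_contra fun h => hne (partner_of_not_exists h), fun h => ?_⟩
  have hedge : s(v, partner M v) ∈ G.edgeSet := by
    simpa using (mem_matchings.mp hM).1 (mk_partner_mem h)
  exact fun heq => G.not_isDiag_of_mem_edgeSet hedge (Sym2.mk_isDiag_iff.mpr heq.symm)

theorem partner_involutive (hM : M ∈ G.matchings) : Involutive (partner M) := by
  intro v
  by_cases h : ∃ e ∈ M, v ∈ e
  · have hswap : s(partner M v, v) = s(partner M v, partner M (partner M v)) := by
      rw [Sym2.eq_swap]
      exact eq_mk_partner hM (mk_partner_mem h) (Sym2.mem_mk_right _ _)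
    exact (Sym2.congr_right.mp hswap).symm
  · rw [partner_of_not_exists h, partner_of_not_exists h]

theorem supportEdges_toPerm_partner (hM : M ∈ G.matchings) :
    ((partner_involutive hM).toPerm _).supportEdges = M := by
  ext e
  simp only [supportEdges, mem_image, Perm.mem_support, Involutive.coe_toPerm, partner_ne_iff hM]
  constructor
  · rintro ⟨v, hv, rfl⟩
    exact mk_partner_mem hv
  · intro he
    exact ⟨e.out.1, ⟨e, he, Sym2.out_fst_mem e⟩, (eq_mk_partner hM he (Sym2.out_fst_mem e)).symm⟩

theorem two_mul_card_le_of_mem_matchings (hM : M ∈ G.matchings) : 2 * #M ≤ Fintype.card V := by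
  conv_lhs => rw [← supportEdges_toPerm_partner hM]
  rw [← card_support_eq_two_mul_card_supportEdges (Involutive.toPerm_involutive _)]
  exact card_le_univ _

end matchings

variable (G) in
open scoped Classical in
noncomputable def matchingPerms : Finset (Perm V) :=
  univ.filter fun σ => Involutive σ ∧ ∀ v ∈ σ.support, G.Adj (σ v) v

theorem mem_matchingPerms {σ : Perm V} :
    σ ∈ G.matchingPerms ↔ Involutive σ ∧ ∀ v ∈ σ.support, G.Adj (σ v) v := by
  simp [matchingPerms]

theorem sum_matchingPerms_eq_sum_matchings {β : Type*} [AddCommMonoid β] (f : ℕ → β) :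
    ∑ σ ∈ G.matchingPerms, f #σ.support = ∑ M ∈ G.matchings, f (2 * #M) := by
  refine sum_bij' (fun σ _ => σ.supportEdges) (fun M hM => (partner_involutive hM).toPerm _)
    (fun σ hσ => supportEdges_mem_matchings (mem_matchingPerms.mp hσ).1
      (mem_matchingPerms.mp hσ).2)
    (fun M hM => mem_matchingPerms.mpr ⟨Involutive.toPerm_involutive _, fun v hv => ?_⟩)
    (fun σ hσ => Equiv.ext (congrFun (partner_supportEdges (mem_matchingPerms.mp hσ).1)))
    (fun M hM => supportEdges_toPerm_partner hM)
    (fun σ hσ => by rw [card_support_eq_two_mul_card_supportEdges (mem_matchingPerms.mp hσ).1])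
  have hcover := (partner_ne_iff hM).mp (Perm.mem_support.mp hv)
  simpa [adj_comm] using (mem_matchings.mp hM).1 (mk_partner_mem hcover)

variable {R : Type*} [CommRing R]

variable (G R) in
noncomputable def matchingPoly : R[X] :=
  ∑ M ∈ G.matchings, (-1) ^ #M * X ^ (Fintype.card V - 2 * #M)

theorem matchingPoly_eq_sum_range : G.matchingPoly R = ∑ i ∈ range (Fintype.card V + 1),
      C ((-1) ^ i * (#{M ∈ G.matchings | #M = i} : R)) * X ^ (Fintype.card V - 2 * i) := by
  have hmaps : ∀ M ∈ G.matchings, #M ∈ range (Fintype.card V + 1) := fun M hM =>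
    mem_range.mpr (by linarith [two_mul_card_le_of_mem_matchings hM])
  rw [matchingPoly, ← sum_fiberwise_of_maps_to hmaps]
  refine sum_congr rfl fun i _ => ?_
  rw [sum_congr rfl fun M hM => by rw [(mem_filter.mp hM).2], sum_const, nsmul_eq_mul]
  simp only [map_mul, map_pow, map_neg, map_one, map_natCast]
  ring

section signedAdjMatrix

variable (G R) in
def signedAdjMatrix (s : G.edgeFinset → Bool) : Matrix V V R := fun u v =>
  if h : s(u, v) ∈ G.edgeFinset then (if s ⟨s(u, v), h⟩ then 1 else -1) else 0

variable (s : G.edgeFinset → Bool)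

theorem signedAdjMatrix_apply_of_not_adj {u v : V} (h : ¬G.Adj u v) :
    G.signedAdjMatrix R s u v = 0 :=
  dif_neg (by simpa using h)

theorem signedAdjMatrix_apply_self (v : V) : G.signedAdjMatrix R s v v = 0 :=
  signedAdjMatrix_apply_of_not_adj s G.irrefl

theorem signedAdjMatrix_comm (u v : V) :
    G.signedAdjMatrix R s u v = G.signedAdjMatrix R s v u := by
  simp only [signedAdjMatrix, Sym2.eq_swap]

theorem signedAdjMatrix_mul_self_of_adj {u v : V} (h : G.Adj u v) :
    G.signedAdjMatrix R s u v * G.signedAdjMatrix R s u v = 1 := by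
  rw [signedAdjMatrix, dif_pos (by simpa using h)]
  split_ifs <;> simp

theorem signedAdjMatrix_update_of_ne {u v : V} {e : G.edgeFinset} (h : s(u, v) ≠ e) (b : Bool) :
    G.signedAdjMatrix R (update s e b) u v = G.signedAdjMatrix R s u v := by
  have hs : ∀ he : s(u, v) ∈ G.edgeFinset, update s e b ⟨_, he⟩ = s ⟨_, he⟩ :=
    fun he => update_of_ne (fun hc => h (congrArg Subtype.val hc)) _ _
  simp only [signedAdjMatrix, hs]

theorem signedAdjMatrix_update_not_self {u v : V} (he : s(u, v) ∈ G.edgeFinset) :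
    G.signedAdjMatrix R (update s ⟨_, he⟩ (!s ⟨_, he⟩)) u v = -G.signedAdjMatrix R s u v := by
  rw [signedAdjMatrix, signedAdjMatrix, dif_pos he, dif_pos he, update_self]
  cases s ⟨_, he⟩ <;> simp

end signedAdjMatrix

theorem prod_neg_signedAdjMatrix_of_involutive {σ : Perm V} (hσ : Involutive σ)
    (hadj : ∀ v ∈ σ.support, G.Adj (σ v) v) (s : G.edgeFinset → Bool) :
    ∏ v ∈ σ.support, -G.signedAdjMatrix R s (σ v) v = 1 :=
  prod_involution (fun v _ => σ v)
    (fun v hv => by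
      rw [neg_mul_neg, hσ v, signedAdjMatrix_comm s v,
        signedAdjMatrix_mul_self_of_adj s (hadj v hv)])
    (fun v hv _ => Perm.mem_support.mp hv) (fun _ hv => apply_mem_support.mpr hv)
    (fun v _ => hσ v)

theorem sum_prod_neg_signedAdjMatrix_of_not_involutive {σ : Perm V} (hσ : ¬Involutive σ) :
    ∑ s : G.edgeFinset → Bool, ∏ v ∈ σ.support, -G.signedAdjMatrix R s (σ v) v = 0 := by
  obtain ⟨v₀, hv₀⟩ := not_forall.mp hσ
  have hv₀σ : v₀ ∈ σ.support := Perm.mem_support.mpr fun h => hv₀ (by rw [h, h])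
  by_cases hadj : G.Adj (σ v₀) v₀
  swap
  · exact sum_eq_zero fun s _ =>
      prod_eq_zero hv₀σ (by rw [signedAdjMatrix_apply_of_not_adj s hadj, neg_zero])
  have he : s(σ v₀, v₀) ∈ G.edgeFinset := by simpa using hadj
  have hne : ∀ v ∈ σ.support.erase v₀, s(σ v, v) ≠ s(σ v₀, v₀) := by
    intro v hv hc
    rcases Sym2.eq_iff.mp hc with ⟨-, rfl⟩ | ⟨h, rfl⟩
    · exact (ne_of_mem_erase hv) rfl
    · exact hv₀ h
  refine sum_ninvolution (fun s => update s ⟨_, he⟩ (!s ⟨_, he⟩)) (fun s => ?_)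
    (fun s _ h => by simpa using congrFun h ⟨_, he⟩) (fun _ => mem_univ _) (fun s => by simp)
  have hrest : ∏ v ∈ σ.support.erase v₀,
      -G.signedAdjMatrix R (update s ⟨_, he⟩ (!s ⟨_, he⟩)) (σ v) v =
      ∏ v ∈ σ.support.erase v₀, -G.signedAdjMatrix R s (σ v) v :=
    prod_congr rfl fun v hv => by rw [signedAdjMatrix_update_of_ne (e := ⟨_, he⟩) s (hne v hv)]
  rw [← mul_prod_erase _ _ hv₀σ, ← mul_prod_erase _ _ hv₀σ, hrest,
    signedAdjMatrix_update_not_self]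
  ring

theorem sum_prod_neg_signedAdjMatrix (σ : Perm V) :
    ∑ s : G.edgeFinset → Bool, ∏ v ∈ σ.support, -G.signedAdjMatrix R s (σ v) v =
      if σ ∈ G.matchingPerms then 2 ^ #G.edgeFinset else 0 := by
  split_ifs with h
  · obtain ⟨hσ, hadj⟩ := mem_matchingPerms.mp h
    rw [sum_congr rfl fun s _ => prod_neg_signedAdjMatrix_of_involutive hσ hadj s, sum_const,
      card_univ, Fintype.card_fun, Fintype.card_bool, Fintype.card_coe, nsmul_one, Nat.cast_pow,
      Nat.cast_ofNat]
  by_cases hσ : Involutive σ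
  · obtain ⟨v, hv, hadj⟩ : ∃ v ∈ σ.support, ¬G.Adj (σ v) v := by
      simpa [mem_matchingPerms, hσ] using h
    exact sum_eq_zero fun s _ =>
      prod_eq_zero hv (by rw [signedAdjMatrix_apply_of_not_adj s hadj, neg_zero])
  · exact sum_prod_neg_signedAdjMatrix_of_not_involutive hσ

theorem sum_charpoly_signedAdjMatrix :
    ∑ s : G.edgeFinset → Bool, (G.signedAdjMatrix R s).charpoly =
      2 ^ #G.edgeFinset • G.matchingPoly R := by
  let term : ℕ → R[X] := fun k =>
    (-1 : ℤˣ) ^ (k / 2) • (C (2 ^ #G.edgeFinset) * X ^ (Fintype.card V - k))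
  calc ∑ s : G.edgeFinset → Bool, (G.signedAdjMatrix R s).charpoly
      = ∑ σ : Perm V, sign σ • (C (∑ s : G.edgeFinset → Bool,
          ∏ v ∈ σ.support, -G.signedAdjMatrix R s (σ v) v) *
            X ^ (Fintype.card V - #σ.support)) := by
        simp_rw [charpoly_eq_sum_perm_of_diag_eq_zero _ (signedAdjMatrix_apply_self _), map_sum,
          sum_mul, smul_sum]
        exact sum_comm
    _ = ∑ σ ∈ G.matchingPerms, term #σ.support := by
        refine (sum_subset (subset_univ _) fun σ _ hσ => ?_).symm.trans
          (sum_congr rfl fun σ hσ => ?_)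
        · rw [sum_prod_neg_signedAdjMatrix, if_neg hσ, map_zero, zero_mul, smul_zero]
        · rw [sum_prod_neg_signedAdjMatrix, if_pos hσ,
            sign_of_involutive (mem_matchingPerms.mp hσ).1]
    _ = ∑ M ∈ G.matchings, term (2 * #M) := sum_matchingPerms_eq_sum_matchings term
    _ = 2 ^ #G.edgeFinset • G.matchingPoly R := by
        simp only [term, matchingPoly, smul_sum, Nat.mul_div_cancel_left _ two_pos]
        refine sum_congr rfl fun M _ => ?_
        simp only [map_pow, map_ofNat, Units.smul_def, Units.val_pow_eq_pow_val, Units.val_neg,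
          Units.val_one, zsmul_eq_mul, Int.cast_pow, Int.cast_neg, Int.cast_one, nsmul_eq_mul,
          Nat.cast_pow, Nat.cast_ofNat]
        ring

end SimpleGraph

open SimpleGraph

open scoped Classical in
/-- Godsil–Gutman: For a simple graph `G` on `n` vertices with `m` edges,
the average over all `2^m` signings `s` of the characteristic polynomial of the signed
adjacency matrix `A_s` equals the matching polynomial
`μ_G(x) = Σ_i (-1)^i m_i x^{n-2i}`. -/
theorem godsil_gutman
    {V : Type*} [Fintype V] [DecidableEq V]
    (G : SimpleGraph V) [DecidableRel G.Adj]
    (n m : ℕ) (hn : Fintype.card V = n) (hm : G.edgeFinset.card = m)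
    (matchCount : ℕ → ℕ)
    (hmatch : ∀ i, matchCount i = (G.edgeFinset.powerset.filter
      (fun M => M.card = i ∧
        ∀ a ∈ M, ∀ b ∈ M, a ≠ b → ∀ v : V, ¬(v ∈ a ∧ v ∈ b))).card)
    (Asgn : (G.edgeFinset → Bool) → Matrix V V ℝ)
    (hAsgn : ∀ s u v, Asgn s u v =
      if h : s(u, v) ∈ G.edgeFinset then (if s ⟨s(u, v), h⟩ then 1 else -1) else 0) :
    ((2 : ℝ) ^ m)⁻¹ • (∑ s : (G.edgeFinset → Bool), (Asgn s).charpoly)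
      = ∑ i ∈ Finset.range (n + 1),
          C ((-1) ^ i * (matchCount i : ℝ)) * X ^ (n - 2 * i) := by
  subst hn hm
  have hA : Asgn = G.signedAdjMatrix ℝ := funext fun s => Matrix.ext (hAsgn s)
  have hcount : ∀ i, #{M ∈ G.matchings | #M = i} = matchCount i := fun i => by
    rw [hmatch, matchings, filter_filter]
    simp_rw [and_comm]
  rw [hA, sum_charpoly_signedAdjMatrix, ← Nat.cast_smul_eq_nsmul ℝ, smul_smul, Nat.cast_pow,
    Nat.cast_ofNat, inv_mul_cancel₀ (by positivity), one_smul, matchingPoly_eq_sum_range]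
  simp_rw [hcount]
end

section
/- Let f_1,…,f_k be monic (or positive-leading-coefficient) real-rooted polynomials of degree n having a common interlacing, and let f = f_1 + ⋯ + f_k. Then f is real-rooted, and for each ℓ ∈ {1,…,n} there exists an index i such that the ℓ-th largest root of f_i is at most the ℓ-th largest root of f, and there exists an index j such that the ℓ-th largest root of f_j is at least the ℓ-th largest root of f. -/
open Polynomial

/-- A real polynomial is real-rooted if it has as many real roots
(with multiplicity) as its degree. -/
def RealRooted (f : Polynomial ℝ) : Prop := (f.roots.card : ℕ) = f.natDegree

/-- The `ℓ`-th largest real root of `f` (1-indexed). -/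
noncomputable def nthLargestRoot (f : Polynomial ℝ) (ℓ : ℕ) : ℝ :=
  (f.roots.sort (· ≤ ·)).getD (Multiset.card f.roots - ℓ) 0

/-- `g` interlaces `f`: both are real-rooted, `deg g = deg f - 1`, and the ascending
roots satisfy `β₁ ≤ α₁ ≤ β₂ ≤ ⋯ ≤ α_{n-1} ≤ β_n`. -/
def Interlaces (g f : Polynomial ℝ) : Prop :=
  RealRooted g ∧ RealRooted f ∧ g.natDegree + 1 = f.natDegree ∧
    ∀ i : ℕ, i < g.natDegree →
      (f.roots.sort (· ≤ ·)).getD i 0 ≤ (g.roots.sort (· ≤ ·)).getD i 0 ∧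
      (g.roots.sort (· ≤ ·)).getD i 0 ≤ (f.roots.sort (· ≤ ·)).getD (i + 1) 0


/-!
If the `f i` have no common root, the common interlacing yields points `p 0 ≤ p 1 ≤ ⋯ ≤ p n`
such that `p m` lies between the `m`-th and `(m+1)`-st smallest roots of every `f i`.
Each `f i` vanishes at `p m` or has the sign `(-1) ^ (n - m)` there, and not all of them vanish,
so `∑ i, f i` has the strict sign `(-1) ^ (n - m)` at `p m`; by the intermediate value theorem it
has a root in each of the `n` intervals `(p m, p (m + 1))`, hence is real-rooted. If at its `m`-th
root `r` all the `f i` had their `m`-th root on the same side of `r`, they would all have the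
same weak sign at `r` without all vanishing, so the sum could not vanish at `r`.
A common root of all `f i` is divided out, and the theorem follows by induction on the degree.

Positions of roots are compared through the counting functions `#{roots ≤ x}` and
`#{roots < x}`: multiplying every polynomial by `X - C v` shifts all of them uniformly.
-/

theorem List.Pairwise.lt_countP_iff {α : Type*} [Preorder α] {l : List α}
    (hl : l.Pairwise (· ≤ ·)) {p : α → Bool} (hp : ∀ a b, a ≤ b → p b → p a)
    {j : ℕ} (hj : j < l.length) : j < l.countP p ↔ p l[j] := by
  induction l generalizing j with
  | nil => simp at hj
  | cons a t ih =>
    rw [List.pairwise_cons] at hl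
    by_cases ha : p a
    · cases j with
      | zero => simp [ha]
      | succ j => simp [ha, ← ih hl.2 (Nat.lt_of_succ_lt_succ hj)]
    · have hpt : ∀ b ∈ t, ¬ p b := fun b hb hpb => ha (hp a b (hl.1 b hb) hpb)
      cases j with
      | zero => simp [ha, List.countP_eq_zero.mpr hpt]
      | succ j => simp [ha, List.countP_eq_zero.mpr hpt, hpt _ (List.getElem_mem _)]

theorem Multiset.countP_mono_left {α : Type*} {p q : α → Prop} [DecidablePred p] [DecidablePred q]
    (s : Multiset α) (h : ∀ a ∈ s, p a → q a) : s.countP p ≤ s.countP q := by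
  rcases s with ⟨l⟩
  exact List.countP_mono_left fun a ha => by simpa using h a ha

namespace Multiset

variable (s : Multiset ℝ)

theorem countP_le_mono {x y : ℝ} (hxy : x ≤ y) : s.countP (· ≤ x) ≤ s.countP (· ≤ y) :=
  s.countP_mono_left fun _ _ h => h.trans hxy

theorem countP_lt_mono {x y : ℝ} (hxy : x ≤ y) : s.countP (· < x) ≤ s.countP (· < y) :=
  s.countP_mono_left fun _ _ h => h.trans_le hxy

theorem countP_lt_le_countP_le (x : ℝ) : s.countP (· < x) ≤ s.countP (· ≤ x) :=
  s.countP_mono_left fun _ _ => le_of_lt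

theorem countP_le_le_countP_lt {x y : ℝ} (hxy : x < y) : s.countP (· ≤ x) ≤ s.countP (· < y) :=
  s.countP_mono_left fun _ _ h => h.trans_lt hxy

theorem countP_le_lt_countP_lt_of_mem {x y r : ℝ} (hr : r ∈ s) (hxr : x < r) (hry : r < y) :
    s.countP (· ≤ x) < s.countP (· < y) := by
  obtain ⟨t, rfl⟩ := exists_cons_of_mem hr
  simp only [countP_cons, if_neg hxr.not_ge, if_pos hry]
  exact Nat.lt_succ_of_le (t.countP_le_le_countP_lt (hxr.trans hry))

theorem zero_le_neg_one_pow_countP_mul_prod (x : ℝ) :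
    0 ≤ (-1) ^ s.countP (x < ·) * (s.map (x - ·)).prod := by
  induction s using Multiset.induction_on with
  | empty => simp
  | cons a s ih =>
    rw [countP_cons, map_cons, prod_cons, pow_add]
    split_ifs <;> nlinarith

end Multiset

/-- The `j`-th smallest element of `s`, counted from `0` with multiplicity (junk value `0` for
`j ≥ s.card`). -/
noncomputable def nthSmallest (s : Multiset ℝ) (j : ℕ) : ℝ := (s.sort (· ≤ ·)).getD j 0

section nthSmallest

variable {s : Multiset ℝ} {j : ℕ}

theorem nthLargestRoot_eq_nthSmallest {p : ℝ[X]} {n : ℕ} (hp : p.roots.card = n) (ℓ : ℕ) :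
    nthLargestRoot p ℓ = nthSmallest p.roots (n - ℓ) := by
  rw [← hp]
  rfl

theorem nthSmallest_eq_getElem (hj : j < s.card) :
    nthSmallest s j = (s.sort (· ≤ ·))[j]'(by rwa [Multiset.length_sort]) :=
  List.getD_eq_getElem _ _ _

theorem nthSmallest_mem (hj : j < s.card) : nthSmallest s j ∈ s := by
  rw [nthSmallest_eq_getElem hj, ← Multiset.mem_sort (· ≤ ·)]
  exact List.getElem_mem _

theorem lt_countP_iff_apply_nthSmallest {p : ℝ → Prop} [DecidablePred p]
    (hp : ∀ a b, a ≤ b → p b → p a) (hj : j < s.card) : j < s.countP p ↔ p (nthSmallest s j) := by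
  conv_lhs => rw [← Multiset.sort_eq s (· ≤ ·), Multiset.coe_countP]
  rw [(Multiset.pairwise_sort s _).lt_countP_iff (by simpa using hp), nthSmallest_eq_getElem hj,
    decide_eq_true_iff]

theorem nthSmallest_le_iff (hj : j < s.card) {x : ℝ} :
    nthSmallest s j ≤ x ↔ j < s.countP (· ≤ x) :=
  (lt_countP_iff_apply_nthSmallest (fun _ _ hab hb => hab.trans hb) hj).symm

theorem nthSmallest_lt_iff (hj : j < s.card) {x : ℝ} :
    nthSmallest s j < x ↔ j < s.countP (· < x) :=
  (lt_countP_iff_apply_nthSmallest (fun _ _ hab hb => hab.trans_lt hb) hj).symm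

theorem le_nthSmallest_iff (hj : j < s.card) {x : ℝ} :
    x ≤ nthSmallest s j ↔ s.countP (· < x) ≤ j := by
  rw [← not_lt, nthSmallest_lt_iff hj, not_lt]

theorem nthSmallest_mono {j' : ℕ} (hjj' : j ≤ j') (hj' : j' < s.card) :
    nthSmallest s j ≤ nthSmallest s j' := by
  rw [nthSmallest_le_iff (hjj'.trans_lt hj')]
  exact hjj'.trans_lt ((nthSmallest_le_iff hj').mp le_rfl)

theorem card_eq_and_nthSmallest_mem_Ioo {n : ℕ} {p : ℕ → ℝ} (hcard : s.card ≤ n)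
    (hsep : ∀ m < n, ∃ r ∈ s, p m < r ∧ r < p (m + 1)) :
    s.card = n ∧ ∀ m < n, p m < nthSmallest s m ∧ nthSmallest s m < p (m + 1) := by
  have hstep : ∀ m < n, s.countP (· ≤ p m) < s.countP (· < p (m + 1)) := fun m hm => by
    obtain ⟨r, hr, hmr, hrm⟩ := hsep m hm
    exact s.countP_le_lt_countP_lt_of_mem hr hmr hrm
  have hgrow : ∀ m d, m + d ≤ n → s.countP (· < p m) + d ≤ s.countP (· < p (m + d)) := by
    intro m d
    induction d with
    | zero => simp
    | succ d ih =>
      intro hmd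
      have := hstep (m + d) (by omega)
      have := s.countP_lt_le_countP_le (p (m + d))
      have := ih (by omega)
      change _ ≤ s.countP (· < p (m + d + 1))
      omega
  have hlow : ∀ m ≤ n, m ≤ s.countP (· < p m) := fun m hm => by
    have := hgrow 0 m (by omega)
    rw [zero_add] at this
    omega
  have hn : n ≤ s.card := (hlow n le_rfl).trans (s.countP_le_card _)
  refine ⟨hcard.antisymm hn, fun m hm => ⟨?_, ?_⟩⟩
  · rw [← not_le, nthSmallest_le_iff (by omega), not_lt]
    have := hstep m hm
    have := hgrow (m + 1) (n - (m + 1)) (by omega)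
    rw [show m + 1 + (n - (m + 1)) = n by omega] at this
    have := s.countP_le_card (· < p n)
    omega
  · exact (nthSmallest_lt_iff (by omega)).mpr (hlow (m + 1) hm)

end nthSmallest

section Counts

variable {ι : Type*}

/-- Counting form of `nthSmallest (t a) m ≤ nthSmallest (t b) (m + 1)` for all `a`, `b`, `m`,
i.e. of the family having a common interlacing; unlike that form it passes to the quotients by a
common root. -/
def CountsInterlace (t : ι → Multiset ℝ) : Prop :=
  ∀ a b x y, x < y → (t b).countP (· ≤ x) ≤ (t a).countP (· < y) + 1

/-- Counting form of: for every `j`, the `j`-th smallest element of `s` lies between the `j`-th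
smallest elements of two members of the family `t`. -/
def CountsBetween (s : Multiset ℝ) (t : ι → Multiset ℝ) : Prop :=
  (∀ x, ∃ i, s.countP (· ≤ x) ≤ (t i).countP (· ≤ x)) ∧
    ∀ x, ∃ i, (t i).countP (· < x) ≤ s.countP (· < x)

theorem countsInterlace_of_nthSmallest_le {t : ι → Multiset ℝ} {n : ℕ}
    (hcard : ∀ i, (t i).card = n)
    (h : ∀ a b m, m + 1 < n → nthSmallest (t a) m ≤ nthSmallest (t b) (m + 1)) :
    CountsInterlace t := by
  intro a b x y hxy
  by_contra! hlt
  set j := (t a).countP (· < y)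
  have hjn : j + 1 < n := hlt.trans_le (hcard b ▸ Multiset.countP_le_card _ _)
  have hb : nthSmallest (t b) (j + 1) ≤ x := (nthSmallest_le_iff (by rw [hcard]; omega)).mpr hlt
  have ha : y ≤ nthSmallest (t a) j := (le_nthSmallest_iff (by rw [hcard]; omega)).mpr le_rfl
  linarith [h a b j hjn]

theorem CountsInterlace.of_cons {t : ι → Multiset ℝ} {v : ℝ}
    (h : CountsInterlace fun i => v ::ₘ t i) : CountsInterlace t := by
  intro a b x y hxy
  have hcons := h a b x y hxy
  simp only [Multiset.countP_cons] at hcons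
  rcases le_or_gt v x with hvx | hxv
  · simpa [hvx, hvx.trans_lt hxy] using hcons
  rcases le_or_gt y v with hyv | hvy
  · simpa [hxv.not_ge, hyv.not_gt] using hcons
  have hv := h a b x v hxv
  simp only [Multiset.countP_cons, hxv.not_ge, lt_irrefl, if_false] at hv
  exact hv.trans (by gcongr; exact (t a).countP_lt_mono hvy.le)

theorem CountsInterlace.exists_chain [Fintype ι] [Nonempty ι] {t : ι → Multiset ℝ} {n : ℕ}
    (hcard : ∀ i, (t i).card = n) (ht : CountsInterlace t) :
    ∃ p : ℕ → ℝ, (∀ m < n, p m ≤ p (m + 1)) ∧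
      ∀ m ≤ n, ∀ i, (t i).countP (· < p m) ≤ m ∧ m ≤ (t i).countP (· ≤ p m) := by
  obtain ⟨b, hb⟩ := Finset.bddBelow (∑ i, t i).toFinset
  have hb' : ∀ i, ∀ a ∈ t i, b - 1 < a := fun i a ha =>
    (sub_one_lt b).trans_le (hb (by simpa [Multiset.mem_sum] using ⟨i, ha⟩))
  let p : ℕ → ℝ
    | 0 => b - 1
    | m + 1 => Finset.univ.sup' Finset.univ_nonempty fun i => nthSmallest (t i) m
  have hle_p : ∀ m i, nthSmallest (t i) m ≤ p (m + 1) := fun m i =>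
    Finset.le_sup' (fun i => nthSmallest (t i) m) (Finset.mem_univ i)
  refine ⟨p, ?_, ?_⟩
  · rintro (_ | m) hm
    · obtain ⟨i⟩ := ‹Nonempty ι›
      exact ((hb' i _ (nthSmallest_mem (by rw [hcard]; omega))).trans_le (hle_p 0 i)).le
    · refine Finset.sup'_le _ _ fun i _ => ?_
      exact (nthSmallest_mono m.le_succ (by rw [hcard]; omega)).trans (hle_p (m + 1) i)
  · rintro (_ | m) hm i
    · exact ⟨(Multiset.countP_eq_zero.mpr fun a ha => (hb' i a ha).not_gt).le, Nat.zero_le _⟩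
    refine ⟨?_, (nthSmallest_le_iff (by rw [hcard]; omega)).mp (hle_p m i)⟩
    obtain ⟨a, -, ha⟩ := Finset.exists_mem_eq_sup' Finset.univ_nonempty fun i => nthSmallest (t i) m
    by_contra! hlt
    have hlt' : m + 1 < (t i).card := hlt.trans_le (Multiset.countP_le_card _ _)
    have hi := (nthSmallest_le_iff hlt').mp le_rfl
    have hx : nthSmallest (t i) (m + 1) < p (m + 1) := (nthSmallest_lt_iff hlt').mpr hlt
    have hy : (t a).countP (· < p (m + 1)) ≤ m :=
      (le_nthSmallest_iff (by rw [hcard]; omega)).mp ha.le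
    have := ht a i _ _ hx
    omega

theorem CountsBetween.cons {s : Multiset ℝ} {t : ι → Multiset ℝ} (h : CountsBetween s t) (v : ℝ) :
    CountsBetween (v ::ₘ s) fun i => v ::ₘ t i := by
  refine ⟨fun x => ?_, fun x => ?_⟩
  · obtain ⟨i, hi⟩ := h.1 x
    exact ⟨i, by simp only [Multiset.countP_cons]; omega⟩
  · obtain ⟨i, hi⟩ := h.2 x
    exact ⟨i, by simp only [Multiset.countP_cons]; omega⟩

theorem CountsBetween.exists_nthSmallest_le {s : Multiset ℝ} {t : ι → Multiset ℝ} {n j : ℕ}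
    (h : CountsBetween s t) (hs : s.card = n) (ht : ∀ i, (t i).card = n) (hj : j < n) :
    ∃ i, nthSmallest (t i) j ≤ nthSmallest s j := by
  obtain ⟨i, hi⟩ := h.1 (nthSmallest s j)
  refine ⟨i, (nthSmallest_le_iff (by rwa [ht])).mpr ?_⟩
  exact ((nthSmallest_le_iff (by rwa [hs])).mp le_rfl).trans_le hi

theorem CountsBetween.exists_le_nthSmallest {s : Multiset ℝ} {t : ι → Multiset ℝ} {n j : ℕ}
    (h : CountsBetween s t) (hs : s.card = n) (ht : ∀ i, (t i).card = n) (hj : j < n) :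
    ∃ i, nthSmallest s j ≤ nthSmallest (t i) j := by
  obtain ⟨i, hi⟩ := h.2 (nthSmallest s j)
  refine ⟨i, (le_nthSmallest_iff (by rwa [ht])).mpr ?_⟩
  exact hi.trans ((le_nthSmallest_iff (by rwa [hs])).mp le_rfl)

end Counts

namespace Polynomial

theorem roots_X_sub_C_mul {R : Type*} [CommRing R] [IsDomain R] {q : R[X]} (hq : q ≠ 0) (v : R) :
    ((X - C v) * q).roots = v ::ₘ q.roots := by
  rw [roots_mul (mul_ne_zero (X_sub_C_ne_zero v) hq), roots_X_sub_C, Multiset.singleton_add]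

theorem coeff_sum_of_monic {R ι : Type*} [Semiring R] [Fintype ι] {f : ι → R[X]} {n : ℕ}
    (hmonic : ∀ i, (f i).Monic) (hdeg : ∀ i, (f i).natDegree = n) :
    (∑ i, f i).coeff n = Fintype.card ι := by
  have h1 : ∀ i, (f i).coeff n = 1 := fun i => hdeg i ▸ (hmonic i).coeff_natDegree
  simp [finsetSum_coeff, h1]

theorem natDegree_sum_of_monic {R ι : Type*} [Semiring R] [CharZero R] [Fintype ι] [Nonempty ι]
    {f : ι → R[X]} {n : ℕ} (hmonic : ∀ i, (f i).Monic) (hdeg : ∀ i, (f i).natDegree = n) :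
    (∑ i, f i).natDegree = n :=
  (natDegree_sum_le_of_forall_le _ _ fun i _ => (hdeg i).le).antisymm <|
    le_natDegree_of_ne_zero <| by simp [coeff_sum_of_monic hmonic hdeg, Fintype.card_ne_zero]

theorem sum_ne_zero_of_monic {R ι : Type*} [Semiring R] [CharZero R] [Fintype ι] [Nonempty ι]
    {f : ι → R[X]} {n : ℕ} (hmonic : ∀ i, (f i).Monic) (hdeg : ∀ i, (f i).natDegree = n) :
    ∑ i, f i ≠ 0 := fun h => by
  simpa [h, Fintype.card_ne_zero, eq_comm] using coeff_sum_of_monic hmonic hdeg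

theorem exists_isRoot_mem_Ioo {p : ℝ[X]} {a b : ℝ} (hab : a ≤ b)
    (hsign : p.eval a * p.eval b < 0) : ∃ r ∈ Set.Ioo a b, p.IsRoot r := by
  have hcont := p.continuous.continuousOn (s := Set.Icc a b)
  rcases lt_or_gt_of_ne (left_ne_zero_of_mul hsign.ne) with ha | ha
  · exact intermediate_value_Ioo hab hcont ⟨ha, by nlinarith⟩
  · exact intermediate_value_Ioo' hab hcont ⟨by nlinarith, ha⟩

theorem eval_eq_prod_roots_sub {p : ℝ[X]} (hp : p.Monic) (hroots : p.roots.card = p.natDegree)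
    (x : ℝ) : p.eval x = (p.roots.map (x - ·)).prod := by
  conv_lhs => rw [← prod_multiset_X_sub_C_of_monic_of_roots_card_eq hp hroots]
  simp [eval_multiset_prod, Multiset.map_map]

theorem zero_le_neg_one_pow_mul_eval_of_countP {p : ℝ[X]} (hp : p.Monic)
    (hroots : p.roots.card = p.natDegree) {x : ℝ} {m : ℕ} (hlt : p.roots.countP (· < x) ≤ m)
    (hle : m ≤ p.roots.countP (· ≤ x)) : 0 ≤ (-1) ^ (p.natDegree - m) * p.eval x := by
  by_cases hx : p.IsRoot x
  · simp [hx.eq_zero]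
  have hx' : ∀ a ∈ p.roots, a ≠ x := fun a ha hax => hx (hax ▸ isRoot_of_mem_roots ha)
  have hcount : p.roots.countP (· ≤ x) = p.roots.countP (· < x) :=
    Multiset.countP_congr rfl fun a ha => propext (le_iff_lt_or_eq.trans (or_iff_left (hx' a ha)))
  have hgt : p.roots.countP (x < ·) = p.natDegree - m := by
    have := Multiset.card_eq_countP_add_countP (· ≤ x) p.roots
    simp only [not_le] at this
    omega
  rw [← hgt, eval_eq_prod_roots_sub hp hroots]
  exact p.roots.zero_le_neg_one_pow_countP_mul_prod x

section Sum

variable {ι : Type*} [Fintype ι] {f : ι → ℝ[X]} {n : ℕ}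

theorem zero_lt_neg_one_pow_mul_eval_sum {m : ℕ} (hmonic : ∀ i, (f i).Monic)
    (hdeg : ∀ i, (f i).natDegree = n) (hcard : ∀ i, (f i).roots.card = n) {x : ℝ}
    (hlt : ∀ i, (f i).roots.countP (· < x) ≤ m) (hle : ∀ i, m ≤ (f i).roots.countP (· ≤ x))
    (hx : ∃ i, ¬ (f i).IsRoot x) : 0 < (-1) ^ (n - m) * (∑ i, f i).eval x := by
  have hsign : ∀ i, 0 ≤ (-1) ^ (n - m) * (f i).eval x := fun i => by
    simpa [hdeg i] using zero_le_neg_one_pow_mul_eval_of_countP (hmonic i)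
      ((hcard i).trans (hdeg i).symm) (hlt i) (hle i)
  rw [eval_finsetSum, Finset.mul_sum]
  obtain ⟨i, hi⟩ := hx
  exact Finset.sum_pos' (fun i _ => hsign i) ⟨i, Finset.mem_univ i,
    (hsign i).lt_of_ne (mul_ne_zero (pow_ne_zero _ (by norm_num)) hi).symm⟩

theorem not_isRoot_sum_of_countP {m : ℕ} (hmonic : ∀ i, (f i).Monic)
    (hdeg : ∀ i, (f i).natDegree = n) (hcard : ∀ i, (f i).roots.card = n) {x : ℝ}
    (hlt : ∀ i, (f i).roots.countP (· < x) ≤ m) (hle : ∀ i, m ≤ (f i).roots.countP (· ≤ x))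
    (hx : ∃ i, ¬ (f i).IsRoot x) : ¬ (∑ i, f i).IsRoot x := fun hroot => by
  simpa [hroot.eq_zero] using zero_lt_neg_one_pow_mul_eval_sum hmonic hdeg hcard hlt hle hx

variable [Nonempty ι]

theorem card_roots_sum_and_nthSmallest_mem_Ioo (hmonic : ∀ i, (f i).Monic)
    (hdeg : ∀ i, (f i).natDegree = n) (hcard : ∀ i, (f i).roots.card = n)
    (hno : ∀ x, ∃ i, ¬ (f i).IsRoot x) {p : ℕ → ℝ} (hmono : ∀ m < n, p m ≤ p (m + 1))
    (hp : ∀ m ≤ n, ∀ i, (f i).roots.countP (· < p m) ≤ m ∧ m ≤ (f i).roots.countP (· ≤ p m)) :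
    (∑ i, f i).roots.card = n ∧ ∀ m < n,
      p m < nthSmallest (∑ i, f i).roots m ∧ nthSmallest (∑ i, f i).roots m < p (m + 1) := by
  have hsign : ∀ m ≤ n, 0 < (-1) ^ (n - m) * (∑ i, f i).eval (p m) := fun m hm =>
    zero_lt_neg_one_pow_mul_eval_sum hmonic hdeg hcard (fun i => (hp m hm i).1)
      (fun i => (hp m hm i).2) (hno _)
  refine card_eq_and_nthSmallest_mem_Ioo
    ((card_roots' _).trans (natDegree_sum_of_monic hmonic hdeg).le) fun m hm => ?_
  have hprod : (∑ i, f i).eval (p m) * (∑ i, f i).eval (p (m + 1)) < 0 := by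
    have h1 := hsign m hm.le
    have h2 := hsign (m + 1) hm
    rw [show n - m = n - (m + 1) + 1 by omega, pow_succ] at h1
    nlinarith [pow_mul_pow_eq_one (n - (m + 1)) (show (-1 : ℝ) * -1 = 1 by norm_num)]
  obtain ⟨r, hr, hroot⟩ := exists_isRoot_mem_Ioo (hmono m hm) hprod
  exact ⟨r, (mem_roots (sum_ne_zero_of_monic hmonic hdeg)).mpr hroot, hr⟩

theorem countsBetween_roots_sum (hmonic : ∀ i, (f i).Monic)
    (hdeg : ∀ i, (f i).natDegree = n) (hcard : ∀ i, (f i).roots.card = n)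
    (hno : ∀ x, ∃ i, ¬ (f i).IsRoot x) {p : ℕ → ℝ}
    (hp : ∀ m ≤ n, ∀ i, (f i).roots.countP (· < p m) ≤ m ∧ m ≤ (f i).roots.countP (· ≤ p m))
    (hcardF : (∑ i, f i).roots.card = n)
    (hF : ∀ m < n,
      p m < nthSmallest (∑ i, f i).roots m ∧ nthSmallest (∑ i, f i).roots m < p (m + 1)) :
    CountsBetween (∑ i, f i).roots fun i => (f i).roots := by
  obtain ⟨i₀⟩ := ‹Nonempty ι›
  have hrootF : ∀ m < n, (∑ i, f i).IsRoot (nthSmallest (∑ i, f i).roots m) := fun m hm =>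
    isRoot_of_mem_roots (nthSmallest_mem (hcardF ▸ hm))
  refine ⟨fun x => ?_, fun x => ?_⟩
  · by_contra! hlt
    set u := (∑ i, f i).roots.countP (· ≤ x)
    have hu : u ≤ n := hcardF ▸ Multiset.countP_le_card _ _
    have hu₀ : 0 < u := (Nat.zero_le _).trans_lt (hlt i₀)
    have hr := hF (u - 1) (by omega)
    set r := nthSmallest (∑ i, f i).roots (u - 1)
    have hrx : r ≤ x := by
      rw [nthSmallest_le_iff (by omega)]
      omega
    refine not_isRoot_sum_of_countP hmonic hdeg hcard (m := u - 1) (fun i => ?_) (fun i => ?_)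
      (hno r) (hrootF (u - 1) (by omega))
    · have := (f i).roots.countP_lt_le_countP_le r
      have := (f i).roots.countP_le_mono hrx
      have := hlt i
      omega
    · have := (hp (u - 1) (by omega) i).2.trans ((f i).roots.countP_le_le_countP_lt hr.1)
      have := (f i).roots.countP_lt_le_countP_le r
      omega
  · by_contra! hlt
    set w := (∑ i, f i).roots.countP (· < x)
    have hw : w < n := (hlt i₀).trans_le (hcard i₀ ▸ Multiset.countP_le_card _ _)
    have hr := hF w hw
    set r := nthSmallest (∑ i, f i).roots w
    have hxr : x ≤ r := (le_nthSmallest_iff (hcardF ▸ hw)).mpr le_rfl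
    refine not_isRoot_sum_of_countP hmonic hdeg hcard (m := w + 1) (fun i => ?_) (fun i => ?_)
      (hno r) (hrootF w hw)
    · have := (f i).roots.countP_lt_le_countP_le r
      have := (f i).roots.countP_le_le_countP_lt hr.2
      have := (hp (w + 1) hw i).1
      omega
    · have := (f i).roots.countP_lt_mono hxr
      have := (f i).roots.countP_lt_le_countP_le r
      have := hlt i
      omega

theorem card_roots_sum_and_countsBetween_of_forall_not_isRoot (hmonic : ∀ i, (f i).Monic)
    (hdeg : ∀ i, (f i).natDegree = n) (hcard : ∀ i, (f i).roots.card = n)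
    (ht : CountsInterlace fun i => (f i).roots) (hno : ∀ x, ∃ i, ¬ (f i).IsRoot x) :
    (∑ i, f i).roots.card = n ∧ CountsBetween (∑ i, f i).roots fun i => (f i).roots := by
  obtain ⟨p, hmono, hp⟩ := ht.exists_chain hcard
  obtain ⟨hcardF, hF⟩ := card_roots_sum_and_nthSmallest_mem_Ioo hmonic hdeg hcard hno hmono hp
  exact ⟨hcardF, countsBetween_roots_sum hmonic hdeg hcard hno hp hcardF hF⟩

theorem card_roots_sum_and_countsBetween (hmonic : ∀ i, (f i).Monic)
    (hdeg : ∀ i, (f i).natDegree = n) (hcard : ∀ i, (f i).roots.card = n)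
    (ht : CountsInterlace fun i => (f i).roots) :
    (∑ i, f i).roots.card = n ∧ CountsBetween (∑ i, f i).roots fun i => (f i).roots := by
  induction n generalizing f with
  | zero =>
    refine card_roots_sum_and_countsBetween_of_forall_not_isRoot hmonic hdeg hcard ht fun x => ?_
    obtain ⟨i⟩ := ‹Nonempty ι›
    exact ⟨i, by simp [(hmonic i).natDegree_eq_zero.mp (hdeg i)]⟩
  | succ n ih =>
    by_cases hcommon : ∃ v, ∀ i, (f i).IsRoot v
    swap
    · push Not at hcommon
      exact card_roots_sum_and_countsBetween_of_forall_not_isRoot hmonic hdeg hcard ht hcommon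
    obtain ⟨v, hv⟩ := hcommon
    set g := fun i => f i /ₘ (X - C v)
    have hfac : ∀ i, (X - C v) * g i = f i := fun i => mul_divByMonic_eq_iff_isRoot.mpr (hv i)
    have hgmonic : ∀ i, (g i).Monic := fun i =>
      (monic_X_sub_C v).of_mul_monic_left ((hfac i).symm ▸ hmonic i)
    have hgdeg : ∀ i, (g i).natDegree = n := fun i => by
      simp [g, natDegree_divByMonic _ (monic_X_sub_C v), hdeg]
    have hroots : ∀ i, (f i).roots = v ::ₘ (g i).roots := fun i => by
      rw [← hfac i, roots_X_sub_C_mul (hgmonic i).ne_zero]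
    have hgcard : ∀ i, (g i).roots.card = n := fun i => by
      simpa [hroots, hcard] using hcard i
    have hsum : ∑ i, f i = (X - C v) * ∑ i, g i := by simp only [Finset.mul_sum, hfac]
    have hgt : CountsInterlace fun i => (g i).roots := .of_cons (by simpa [hroots] using ht)
    obtain ⟨hc, hb⟩ := ih hgmonic hgdeg hgcard hgt
    rw [hsum, roots_X_sub_C_mul (sum_ne_zero_of_monic hgmonic hgdeg)]
    refine ⟨by simp [hc], ?_⟩
    simpa only [hroots] using hb.cons v

end Sum

end Polynomial

theorem common_interlacing_root_comparison_general
    (k n : ℕ) (hk : 0 < k) (f : Fin k → Polynomial ℝ)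
    (hmonic : ∀ i, (f i).Monic)
    (hdeg : ∀ i, (f i).natDegree = n)
    (hcommon : ∃ g, ∀ i, Interlaces g (f i)) :
    RealRooted (∑ i, f i) ∧
      ∀ ℓ, 1 ≤ ℓ → ℓ ≤ n →
        (∃ i, nthLargestRoot (f i) ℓ ≤ nthLargestRoot (∑ i, f i) ℓ) ∧
        (∃ j, nthLargestRoot (∑ i, f i) ℓ ≤ nthLargestRoot (f j) ℓ) := by
  have : Nonempty (Fin k) := Fin.pos_iff_nonempty.mp hk
  obtain ⟨g, hg⟩ := hcommon
  have hcard : ∀ i, (f i).roots.card = n := fun i => (hg i).2.1.trans (hdeg i)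
  have hgdeg : g.natDegree + 1 = n := (hg ⟨0, hk⟩).2.2.1.trans (hdeg _)
  have ht : CountsInterlace fun i => (f i).roots :=
    countsInterlace_of_nthSmallest_le hcard fun a b m hm =>
      ((hg a).2.2.2 m (by omega)).1.trans ((hg b).2.2.2 m (by omega)).2
  obtain ⟨hcardF, hb⟩ := card_roots_sum_and_countsBetween hmonic hdeg hcard ht
  refine ⟨hcardF.trans (natDegree_sum_of_monic hmonic hdeg).symm, fun ℓ hℓ hℓn => ?_⟩
  simp only [nthLargestRoot_eq_nthSmallest hcardF, nthLargestRoot_eq_nthSmallest (hcard _)]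
  exact ⟨hb.exists_nthSmallest_le hcardF hcard (by omega),
    hb.exists_le_nthSmallest hcardF hcard (by omega)⟩

/-- If `f₁,…,f_k` are monic real-rooted degree-`n` polynomials with a common
interlacing and `f = f₁ + ⋯ + f_k`, then `f` is real-rooted and for each `ℓ ∈ [n]` some
`f_i` has its `ℓ`-th largest root at most that of `f`, and some `f_j` has its `ℓ`-th
largest root at least that of `f`. -/
theorem common_interlacing_root_comparison
    (k n : ℕ) (hk : 0 < k) (f : Fin k → Polynomial ℝ)
    (hmonic : ∀ i, (f i).Monic)
    (hdeg : ∀ i, (f i).natDegree = n)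
    (hroots : ∀ i, RealRooted (f i))
    (hcommon : ∃ g, ∀ i, Interlaces g (f i)) :
    RealRooted (∑ i, f i) ∧
      ∀ ℓ, 1 ≤ ℓ → ℓ ≤ n →
        (∃ i, nthLargestRoot (f i) ℓ ≤ nthLargestRoot (∑ i, f i) ℓ) ∧
        (∃ j, nthLargestRoot (∑ i, f i) ℓ ≤ nthLargestRoot (f j) ℓ) :=
  common_interlacing_root_comparison_general k n hk f hmonic hdeg hcommon
end
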